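/- The map Δ = Σ_{h=0}^d F_h' ∘ F_h satisfies Δ U_i = U_i' and (Δ − I) U_i ⊆ U_0 + U_1 + ... + U_{i−1} for 0 ≤ i ≤ d. Moreover, Δ is the unique linear map on V with these two properties (for the uniqueness, it suffices that Δ' U_i ⊆ U_i' and (Δ' − I) U_i ⊆ U_0 + ... + U_{i−1} for all i imply Δ' = Δ). -/

import Mathlib

/-!
On `U i` the map `Δ` acts as `F' i`. Since `U 0 + ⋯ + U i = U' 0 + ⋯ + U' i`, every `x ∈ U i`
splits as `F' i x` plus a component in `U' 0 + ⋯ + U' (i-1) = U 0 + ⋯ + U (i-1)`, which gives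
`(Δ - 1) (U i) ⊆ U 0 + ⋯ + U (i-1)`; the same splitting with the roles of `U` and `U'`
exchanged, together with `F' i` vanishing on `U' 0 + ⋯ + U' (i-1)`, shows that `F' i` maps `U i`
onto `U' i`.
For uniqueness, if `Δ'` has the same two properties then `(Δ' - Δ) x` lies both in `U' i` and in
`U' 0 + ⋯ + U' (i-1)`, which meet trivially.
-/

open Finset

section Lattice

variable {α : Type*} [CompleteLattice α]

theorem biSup_Iic_eq_sup_biSup_Iio {ι : Type*} [PartialOrder ι] [LocallyFiniteOrderBot ι]
    (f : ι → α) (i : ι) : ⨆ h ∈ Iic i, f h = f i ⊔ ⨆ h ∈ Iio i, f h := by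
  classical
  rw [← Iio_insert, Finset.iSup_insert]

theorem le_biSup_Iic {ι : Type*} [Preorder ι] [LocallyFiniteOrderBot ι] (f : ι → α)
    (i : ι) : f i ≤ ⨆ h ∈ Iic i, f h :=
  le_iSup₂_of_le (f := fun h _ => f h) i (mem_Iic.2 le_rfl) le_rfl

theorem biSup_Iio_eq_of_biSup_Iic_eq {f g : ℕ → α} {i : ℕ}
    (h : ∀ j < i, ⨆ h ∈ Iic j, f h = ⨆ h ∈ Iic j, g h) :
    ⨆ h ∈ Iio i, f h = ⨆ h ∈ Iio i, g h := by
  cases i with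
  | zero => simp
  | succ j => rw [Finset.Iio_add_one_eq_Iic, h j j.lt_succ_self]

end Lattice

section Semiring

variable {ι R M N : Type*} [Semiring R] [AddCommMonoid M] [Module R M] [AddCommMonoid N]
  [Module R N]

theorem LinearMap.ext_of_iSup_eq_top {U : ι → Submodule R M} (hU : iSup U = ⊤)
    {f g : M →ₗ[R] N} (h : ∀ i, ∀ x ∈ U i, f x = g x) : f = g := by
  have hle : iSup U ≤ LinearMap.eqLocus f g := iSup_le fun i x hx => h i x hx
  exact LinearMap.ext fun x => hle (hU ▸ Submodule.mem_top)

/-- When the `U i` form a direct sum decomposition, this says that `P i` is the projection onto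
`U i`. -/
structure IsProjectionFamily (U : ι → Submodule R M) (P : ι → M →ₗ[R] M) : Prop where
  apply_of_mem : ∀ i, ∀ x ∈ U i, P i x = x
  apply_of_mem_of_ne : ∀ i j, i ≠ j → ∀ x ∈ U j, P i x = 0

namespace IsProjectionFamily

variable {U : ι → Submodule R M} {P : ι → M →ₗ[R] M}

theorem apply_mem (hP : IsProjectionFamily U P) (hU : iSup U = ⊤) (i : ι) (x : M) :
    P i x ∈ U i := by
  refine Submodule.iSup_induction U (motive := fun x => P i x ∈ U i) (hU ▸ Submodule.mem_top)
    (fun j y hy => ?_) (by simp) fun y z hy hz => by simpa using add_mem hy hz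
  obtain rfl | hij := eq_or_ne i j
  · rwa [hP.apply_of_mem i y hy]
  · rw [hP.apply_of_mem_of_ne i j hij y hy]
    exact zero_mem _

theorem sum_comp_apply_of_mem (hP : IsProjectionFamily U P) (G : ι → M →ₗ[R] N)
    {s : Finset ι} {i : ι} (hi : i ∈ s) {x : M} (hx : x ∈ U i) :
    (∑ h ∈ s, G h ∘ₗ P h) x = G i x := by
  rw [LinearMap.sum_apply, sum_eq_single_of_mem i hi fun j _ hji => ?_]
  · simp [hP.apply_of_mem i x hx]
  · simp [hP.apply_of_mem_of_ne j i hji x hx]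

theorem biSup_le_ker (hP : IsProjectionFamily U P) {s : Finset ι} {i : ι} (hi : i ∉ s) :
    ⨆ j ∈ s, U j ≤ LinearMap.ker (P i) :=
  iSup₂_le fun j hj x hx =>
    hP.apply_of_mem_of_ne i j (fun hij => hi (hij ▸ hj)) x hx

theorem map_eq_of_le_sup (hP : IsProjectionFamily U P) (hU : iSup U = ⊤) {S W : Submodule R M}
    {i : ι} (hW : W ≤ LinearMap.ker (P i)) (hUS : U i ≤ S ⊔ W) : S.map (P i) = U i := by
  refine le_antisymm (Submodule.map_le_iff_le_comap.2 fun x _ => hP.apply_mem hU i x) ?_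
  intro y hy
  obtain ⟨v, hv, w, hw, rfl⟩ := Submodule.mem_sup.1 (hUS hy)
  refine ⟨v, hv, ?_⟩
  rw [← hP.apply_of_mem i _ hy, map_add, LinearMap.mem_ker.1 (hW hw), add_zero]

end IsProjectionFamily

end Semiring

section Ring

variable {ι R M : Type*} [Ring R] [AddCommGroup M] [Module R M]

theorem iSupIndep.eq_of_sub_mem_biSup {U : ι → Submodule R M} (hU : iSupIndep U)
    {s : Finset ι} {i : ι} (hi : i ∉ s) {a b : M} (ha : a ∈ U i) (hb : b ∈ U i)
    (hab : a - b ∈ ⨆ h ∈ s, U h) : a = b :=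
  sub_eq_zero.1 <| Submodule.disjoint_def.1 (hU.disjoint_biSup (y := ↑s) hi) _
    (sub_mem ha hb) hab

theorem IsProjectionFamily.sub_apply_mem_biSup_Iio {ι : Type*} [PartialOrder ι]
    [LocallyFiniteOrderBot ι] {U : ι → Submodule R M} {P : ι → M →ₗ[R] M}
    (hP : IsProjectionFamily U P) {i : ι} {x : M} (hx : x ∈ ⨆ h ∈ Iic i, U h) :
    x - P i x ∈ ⨆ h ∈ Iio i, U h := by
  rw [biSup_Iic_eq_sup_biSup_Iio] at hx
  obtain ⟨u, hu, w, hw, rfl⟩ := Submodule.mem_sup.1 hx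
  rw [map_add, hP.apply_of_mem i u hu, hP.biSup_le_ker (by simp) hw, add_zero,
    add_sub_cancel_left]
  exact hw

end Ring

theorem stmt4_general {K V : Type*} [Field K] [AddCommGroup V] [Module K V]
    (d : ℕ)
    (U U' : ℕ → Submodule K V)
    (hUbot : ∀ i, d < i → U i = ⊥)
    (hUtop : iSup U = ⊤) (hU'top : iSup U' = ⊤)
    (hU'ind : iSupIndep U')
    (hpartial : ∀ i ≤ d,
      (⨆ h ∈ Finset.Iic i, U h) = (⨆ h ∈ Finset.Iic i, U' h))
    (F F' : ℕ → V →ₗ[K] V)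
    (hFid : ∀ i, ∀ x ∈ U i, F i x = x)
    (hFzero : ∀ i j, i ≠ j → ∀ x ∈ U j, F i x = 0)
    (hF'id : ∀ i, ∀ x ∈ U' i, F' i x = x)
    (hF'zero : ∀ i j, i ≠ j → ∀ x ∈ U' j, F' i x = 0) :
    (∀ i ≤ d, Submodule.map (∑ h ∈ Finset.range (d + 1), F' h ∘ₗ F h) (U i) = U' i) ∧
    (∀ i ≤ d, ∀ x ∈ U i,
      (∑ h ∈ Finset.range (d + 1), F' h ∘ₗ F h) x - x ∈ ⨆ h ∈ Finset.Iio i, U h) ∧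
    (∀ D : V →ₗ[K] V,
      (∀ i ≤ d, Submodule.map D (U i) ≤ U' i) →
      (∀ i ≤ d, ∀ x ∈ U i, D x - x ∈ ⨆ h ∈ Finset.Iio i, U h) →
      D = ∑ h ∈ Finset.range (d + 1), F' h ∘ₗ F h) := by
  set Δ := ∑ h ∈ Finset.range (d + 1), F' h ∘ₗ F h
  have hF : IsProjectionFamily U F := ⟨hFid, hFzero⟩
  have hF' : IsProjectionFamily U' F' := ⟨hF'id, hF'zero⟩
  have hΔ : ∀ i ≤ d, ∀ x ∈ U i, Δ x = F' i x := fun i hi x hx =>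
    hF.sum_comp_apply_of_mem F' (mem_range.2 (by omega)) hx
  have hIio : ∀ i ≤ d, ⨆ h ∈ Iio i, U h = ⨆ h ∈ Iio i, U' h := fun i hi =>
    biSup_Iio_eq_of_biSup_Iic_eq fun j hj => hpartial j (by omega)
  have hIic : ∀ i ≤ d, U i ≤ ⨆ h ∈ Iic i, U' h := fun i hi =>
    hpartial i hi ▸ le_biSup_Iic U i
  have hΔ_sub : ∀ i ≤ d, ∀ x ∈ U i, Δ x - x ∈ ⨆ h ∈ Iio i, U h := by
    intro i hi x hx
    rw [hΔ i hi x hx, hIio i hi, ← neg_sub]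
    exact neg_mem (hF'.sub_apply_mem_biSup_Iio (hIic i hi hx))
  refine ⟨fun i hi => ?_, hΔ_sub, fun D hD hD_sub => ?_⟩
  · have hmap : (U i).map Δ = (U i).map (F' i) := SetLike.coe_injective <| by
      simpa only [Submodule.map_coe] using Set.image_congr (hΔ i hi)
    have hU' : U' i ≤ U i ⊔ ⨆ h ∈ Iio i, U' h := (le_biSup_Iic U' i).trans_eq <| by
      rw [← hpartial i hi, biSup_Iic_eq_sup_biSup_Iio, hIio i hi]
    rw [hmap]
    exact hF'.map_eq_of_le_sup hU'top (hF'.biSup_le_ker (by simp)) hU'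
  · refine LinearMap.ext_of_iSup_eq_top hUtop fun i x hx => ?_
    rcases le_or_gt i d with hi | hi
    · refine hU'ind.eq_of_sub_mem_biSup (s := Iio i) (by simp) (hD i hi ⟨x, hx, rfl⟩)
        (hΔ i hi x hx ▸ hF'.apply_mem hU'top i x) ?_
      rw [← hIio i hi]
      simpa using sub_mem (hD_sub i hi x hx) (hΔ_sub i hi x hx)
    · rw [hUbot i hi, Submodule.mem_bot] at hx
      simp [hx]

theorem stmt4 {K V : Type*} [Field K] [AddCommGroup V] [Module K V]
    [FiniteDimensional K V] (d : ℕ)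
    (U U' : ℕ → Submodule K V)
    (hUbot : ∀ i, d < i → U i = ⊥) (hU'bot : ∀ i, d < i → U' i = ⊥)
    (hUtop : iSup U = ⊤) (hU'top : iSup U' = ⊤)
    (hUind : iSupIndep U)
    (hU'ind : iSupIndep U')
    (hpartial : ∀ i ≤ d,
      (⨆ h ∈ Finset.Iic i, U h) = (⨆ h ∈ Finset.Iic i, U' h))
    (F F' : ℕ → V →ₗ[K] V)
    (hFid : ∀ i, ∀ x ∈ U i, F i x = x)
    (hFzero : ∀ i j, i ≠ j → ∀ x ∈ U j, F i x = 0)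
    (hF'id : ∀ i, ∀ x ∈ U' i, F' i x = x)
    (hF'zero : ∀ i j, i ≠ j → ∀ x ∈ U' j, F' i x = 0) :
    (∀ i ≤ d, Submodule.map (∑ h ∈ Finset.range (d + 1), F' h ∘ₗ F h) (U i) = U' i) ∧
    (∀ i ≤ d, ∀ x ∈ U i,
      (∑ h ∈ Finset.range (d + 1), F' h ∘ₗ F h) x - x ∈ ⨆ h ∈ Finset.Iio i, U h) ∧
    (∀ D : V →ₗ[K] V,
      (∀ i ≤ d, Submodule.map D (U i) ≤ U' i) →
      (∀ i ≤ d, ∀ x ∈ U i, D x - x ∈ ⨆ h ∈ Finset.Iio i, U h) →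
      D = ∑ h ∈ Finset.range (d + 1), F' h ∘ₗ F h) :=
  stmt4_general d U U' hUbot hUtop hU'top hU'ind hpartial F F' hFid hFzero hF'id hF'zero
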